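/- Let $u(s) = \sum_{x \in A_s, y \in G} \mu(x,y)\frac{G^A(x) - \max\{s, G^A(y)\}}{G^A(x) - G^A(y)}$ (with the convention that the fraction equals $1$ when $G^A(y) \ge s$). Then $\int_0^\infty u(s)\,ds = \sum_{x \in A, y \in G} \mu(x,y)\,\min\{G^A(x),\ (G^A(x)+G^A(y))/2\}$. -/

import Mathlib

/-!
Each edge `(x, y)` contributes to `u(s)` its weight `μ(x,y)` times the share of the segment
interpolating linearly between the heights `G^A(x)` and `G^A(y)` that lies above level `s`.
Since everything is nonnegative the integral and the sum over edges commute, and a single edge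
contributes `∫_0^∞` of its share: `G^A(x)` when `G^A(y) ≥ G^A(x)`, and otherwise `G^A(y)` from
the levels where the whole edge counts plus `(G^A(x) - G^A(y))/2` from the linear ramp above.
Both equal `min {G^A(x), (G^A(x) + G^A(y))/2}` because `G^A ≥ 0`.
-/

open scoped Classical BigOperators
open MeasureTheory

noncomputable def kerPow {V : Type*} (q : V → V → ℝ) : ℕ → V → V → ℝ
  | 0 => fun x y => if x = y then 1 else 0
  | n + 1 => fun x y => ∑' z, kerPow q n x z * q z y

lemma kerPow_nonneg {V : Type*} {q : V → V → ℝ} (hq : ∀ x y, 0 ≤ q x y) :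
    ∀ n x y, 0 ≤ kerPow q n x y
  | 0, x, y => by simp only [kerPow]; split_ifs <;> norm_num
  | n + 1, x, y => tsum_nonneg fun z => mul_nonneg (kerPow_nonneg hq n x z) (hq z y)

/-- Share of an edge lying above level `s`, when the edge is interpolated linearly from height
`a` at its tail to height `b` at its head; edges whose tail lies below `s` do not count. -/
noncomputable def levelShare (a b s : ℝ) : ℝ :=
  if s ≤ a then (if s ≤ b then 1 else (a - max s b) / (a - b)) else 0

namespace levelShare

variable {a b : ℝ}

lemma eq_of_le_of_le {s : ℝ} (hsa : s ≤ a) (hsb : s ≤ b) : levelShare a b s = 1 := by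
  simp [levelShare, hsa, hsb]

lemma eq_of_lt {s : ℝ} (hsa : s ≤ a) (hbs : b < s) :
    levelShare a b s = (a - s) / (a - b) := by
  simp [levelShare, hsa, not_le.2 hbs, max_eq_left hbs.le]

lemma eq_zero_of_lt {s : ℝ} (has : a < s) : levelShare a b s = 0 := by
  simp [levelShare, not_le.2 has]

lemma mem_Icc (s : ℝ) : levelShare a b s ∈ Set.Icc 0 1 := by
  rcases lt_or_ge a s with has | hsa
  · simp [eq_zero_of_lt has]
  rcases le_or_gt s b with hsb | hbs
  · simp [eq_of_le_of_le hsa hsb]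
  rw [eq_of_lt hsa hbs]
  exact ⟨div_nonneg (by linarith) (by linarith), (div_le_one (by linarith)).2 (by linarith)⟩

lemma measurable : Measurable (levelShare a b) := by
  refine Measurable.ite measurableSet_Iic ?_ measurable_const
  refine Measurable.ite measurableSet_Iic measurable_const ?_
  exact (measurable_const.sub (measurable_id.max measurable_const)).div_const _

lemma integrableOn_Icc (x y : ℝ) : IntegrableOn (levelShare a b) (Set.Icc x y) :=
  Measure.integrableOn_of_bounded (M := 1) measure_Icc_lt_top.ne
    measurable.aestronglyMeasurable <| ae_of_all _ fun s => by
      rw [Real.norm_of_nonneg (mem_Icc s).1]; exact (mem_Icc s).2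

lemma intervalIntegrable (x y : ℝ) : IntervalIntegrable (levelShare a b) volume x y :=
  (integrableOn_Icc _ _).intervalIntegrable

lemma integrableOn_Ioi : IntegrableOn (levelShare a b) (Set.Ioi 0) :=
  (integrableOn_Icc 0 a).of_forall_sdiff_eq_zero measurableSet_Ioi fun _ hs =>
    eq_zero_of_lt <| not_le.1 fun hsa => hs.2 ⟨le_of_lt hs.1, hsa⟩

lemma intervalIntegral_of_le (ha : 0 ≤ a) (hab : a ≤ b) :
    ∫ s in (0)..a, levelShare a b s = a := by
  have hone : Set.EqOn (levelShare a b) (fun _ => 1) (Set.uIcc 0 a) := fun s hs => by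
    rw [Set.uIcc_of_le ha] at hs
    exact eq_of_le_of_le hs.2 (hs.2.trans hab)
  simp [intervalIntegral.integral_congr hone]

lemma intervalIntegral_of_lt (hb : 0 ≤ b) (hba : b < a) :
    ∫ s in (0)..a, levelShare a b s = (a + b) / 2 := by
  have hone : Set.EqOn (levelShare a b) (fun _ => 1) (Set.uIcc 0 b) := fun s hs => by
    rw [Set.uIcc_of_le hb] at hs
    exact eq_of_le_of_le (hs.2.trans hba.le) hs.2
  have hlin : Set.EqOn (levelShare a b) (fun s => (a - s) / (a - b)) (Set.uIcc b a) :=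
    fun s hs => by
      rw [Set.uIcc_of_le hba.le] at hs
      rcases hs.1.eq_or_lt with rfl | hbs
      · exact (eq_of_le_of_le hs.2 le_rfl).trans (div_self (sub_ne_zero.2 hba.ne')).symm
      · exact eq_of_lt hs.2 hbs
  rw [← intervalIntegral.integral_add_adjacent_intervals (intervalIntegrable 0 b)
      (intervalIntegrable b a),
    intervalIntegral.integral_congr hone, intervalIntegral.integral_congr hlin,
    intervalIntegral.integral_div, intervalIntegral.integral_sub intervalIntegrable_const
      intervalIntegral.intervalIntegrable_id, integral_id]
  field_simp [sub_ne_zero.2 hba.ne']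
  simp
  ring

lemma setIntegral_Ioi (ha : 0 ≤ a) (hb : 0 ≤ b) :
    ∫ s in Set.Ioi 0, levelShare a b s = min a ((a + b) / 2) := by
  rw [setIntegral_eq_of_subset_of_forall_sdiff_eq_zero measurableSet_Ioi Set.Ioc_subset_Ioi_self
      fun s hs => eq_zero_of_lt <| not_le.1 fun hsa => hs.2 ⟨hs.1, hsa⟩,
    ← intervalIntegral.integral_of_le ha]
  rcases le_or_gt a b with hab | hba
  · rw [intervalIntegral_of_le ha hab, min_eq_left (by linarith)]
  · rw [intervalIntegral_of_lt hb hba, min_eq_right (by linarith)]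

end levelShare

theorem integral_tsum_mul_levelShare {ι : Type*} [Countable ι] {w a b : ι → ℝ}
    (hw : ∀ i, 0 ≤ w i) (ha : ∀ i, 0 ≤ a i) (hb : ∀ i, 0 ≤ b i)
    (hsum : Summable fun i => w i * min (a i) ((a i + b i) / 2)) :
    ∫ s in Set.Ioi 0, ∑' i, w i * levelShare (a i) (b i) s =
      ∑' i, w i * min (a i) ((a i + b i) / 2) := by
  have hint : ∀ i, ∫ s in Set.Ioi 0, w i * levelShare (a i) (b i) s =
      w i * min (a i) ((a i + b i) / 2) := fun i => by
    rw [integral_const_mul, levelShare.setIntegral_Ioi (ha i) (hb i)]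
  have hnorm : ∀ i s, ‖w i * levelShare (a i) (b i) s‖ = w i * levelShare (a i) (b i) s :=
    fun i s => Real.norm_of_nonneg (mul_nonneg (hw i) (levelShare.mem_Icc s).1)
  rw [← integral_tsum_of_summable_integral_norm
      (fun i => levelShare.integrableOn_Ioi.const_mul (w i))
      (by simpa only [hnorm, hint] using hsum),
    tsum_congr hint]

theorem statement6_general {V : Type*} [Countable V]
    (p : V → V → ℝ) (m : V → ℝ)
    (hp : ∀ x y, 0 ≤ p x y)
    (hm : ∀ x, 0 < m x)
    (A : Set V) (o : V)
    (pA : V → V → ℝ) (hpA : ∀ x y, pA x y = if x ∈ A then p x y else 0)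
    (GA : V → ℝ)
    (hGA : ∀ x, GA x = if x ∈ A then (∑' k : ℕ, kerPow pA k o x) / m x else 0)
    (u : ℝ → ℝ)
    (hu : ∀ s, u s = ∑' xy : V × V,
      if xy.1 ∈ A ∧ s ≤ GA xy.1 then
        m xy.1 * p xy.1 xy.2 *
          (if s ≤ GA xy.2 then 1
           else (GA xy.1 - max s (GA xy.2)) / (GA xy.1 - GA xy.2))
      else 0)
    (hmin_sum : Summable fun xy : V × V =>
      if xy.1 ∈ A then
        m xy.1 * p xy.1 xy.2 * min (GA xy.1) ((GA xy.1 + GA xy.2) / 2)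
      else 0) :
    (∫ s in Set.Ioi (0 : ℝ), u s) =
      ∑' xy : V × V,
        if xy.1 ∈ A then
          m xy.1 * p xy.1 xy.2 * min (GA xy.1) ((GA xy.1 + GA xy.2) / 2)
        else 0 := by
  have hpA_nonneg : ∀ x y, 0 ≤ pA x y := fun x y => by
    rw [hpA]; split_ifs <;> simp [hp]
  have hGA_nonneg : ∀ x, 0 ≤ GA x := fun x => by
    rw [hGA]; split_ifs
    · exact div_nonneg (tsum_nonneg fun k => kerPow_nonneg hpA_nonneg k o x) (hm x).le
    · exact le_rfl
  set w : V × V → ℝ := fun xy => if xy.1 ∈ A then m xy.1 * p xy.1 xy.2 else 0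
  have hw : ∀ xy, 0 ≤ w xy := fun xy => by
    simp only [w]; split_ifs
    · exact mul_nonneg (hm _).le (hp _ _)
    · exact le_rfl
  have hu_eq : ∀ s, u s = ∑' xy, w xy * levelShare (GA xy.1) (GA xy.2) s := fun s => by
    rw [hu]; congr 1; ext xy
    by_cases hx : xy.1 ∈ A <;> simp [w, levelShare, hx]
  have hmin_eq : (fun xy : V × V => if xy.1 ∈ A then
      m xy.1 * p xy.1 xy.2 * min (GA xy.1) ((GA xy.1 + GA xy.2) / 2) else 0) =
      fun xy => w xy * min (GA xy.1) ((GA xy.1 + GA xy.2) / 2) := by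
    ext xy; by_cases hx : xy.1 ∈ A <;> simp [w, hx]
  calc (∫ s in Set.Ioi (0 : ℝ), u s)
      = ∫ s in Set.Ioi (0 : ℝ), ∑' xy, w xy * levelShare (GA xy.1) (GA xy.2) s := by
        simp_rw [hu_eq]
    _ = ∑' xy, w xy * min (GA xy.1) ((GA xy.1 + GA xy.2) / 2) :=
        integral_tsum_mul_levelShare hw (fun _ => hGA_nonneg _) (fun _ => hGA_nonneg _)
          (hmin_eq ▸ hmin_sum)
    _ = _ := by rw [hmin_eq]

/-- Integral of the linearized superlevel measure
`u(s) = ∑_{x ∈ A_s, y} μ(x,y) (G^A(x) - max(s, G^A(y)))/(G^A(x) - G^A(y))`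
(the fraction taken to be `1` when `G^A(y) ≥ s`):
`∫_0^∞ u(s) ds = ∑_{x ∈ A, y} μ(x,y) min{G^A(x), (G^A(x)+G^A(y))/2}`. -/
theorem statement6 {V : Type*} [Countable V]
    (p : V → V → ℝ) (m : V → ℝ)
    (hp : ∀ x y, 0 ≤ p x y) (hstoch : ∀ x, ∑' y, p x y = 1)
    (hm : ∀ x, 0 < m x) (hrev : ∀ x y, m x * p x y = m y * p y x)
    (A : Set V) (o : V) (ho : o ∈ A)
    (pA : V → V → ℝ) (hpA : ∀ x y, pA x y = if x ∈ A then p x y else 0)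
    (GA : V → ℝ)
    (hGA : ∀ x, GA x = if x ∈ A then (∑' k : ℕ, kerPow pA k o x) / m x else 0)
    (hGfin : ∀ x, Summable fun k : ℕ => kerPow pA k o x)
    (u : ℝ → ℝ)
    (hu : ∀ s, u s = ∑' xy : V × V,
      if xy.1 ∈ A ∧ s ≤ GA xy.1 then
        m xy.1 * p xy.1 xy.2 *
          (if s ≤ GA xy.2 then 1
           else (GA xy.1 - max s (GA xy.2)) / (GA xy.1 - GA xy.2))
      else 0)
    (hu_sum : ∀ s, Summable fun xy : V × V =>
      if xy.1 ∈ A ∧ s ≤ GA xy.1 then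
        m xy.1 * p xy.1 xy.2 *
          (if s ≤ GA xy.2 then 1
           else (GA xy.1 - max s (GA xy.2)) / (GA xy.1 - GA xy.2))
      else 0)
    (hu_int : IntegrableOn u (Set.Ioi (0 : ℝ)))
    (hmin_sum : Summable fun xy : V × V =>
      if xy.1 ∈ A then
        m xy.1 * p xy.1 xy.2 * min (GA xy.1) ((GA xy.1 + GA xy.2) / 2)
      else 0) :
    (∫ s in Set.Ioi (0 : ℝ), u s) =
      ∑' xy : V × V,
        if xy.1 ∈ A then
          m xy.1 * p xy.1 xy.2 * min (GA xy.1) ((GA xy.1 + GA xy.2) / 2)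
        else 0 :=
  statement6_general p m hp hm A o pA hpA GA hGA u hu hmin_sum
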